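/- Let f, g ∈ L^∞ and z ∈ 𝔻. Then, as bounded operators from H² to [H²]^⊥, S_{φ_z} H_f T_g T_{φ̄_z} − H_f T_g = −(H_f T_g k_z) ⊗ k_z + [(H_f k_z) ⊗ (H_g* U k_{z̄})] T_{φ̄_z}. -/

import Mathlib

open MeasureTheory Filter Topology ComplexConjugate ENNReal

noncomputable section

namespace HTTO

instance fact2pi : Fact (0 < 2 * Real.pi) := ⟨Real.two_pi_pos⟩

/-- The unit circle, modeled additively as `ℝ / 2πℤ`; the point `x` corresponds to `e^{ix}`. -/
abbrev Circ : Type := AddCircle (2 * Real.pi)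

/-- Normalized Haar (Lebesgue) measure on the circle. -/
abbrev hm : Measure Circ := AddCircle.haarAddCircle

/-- The Lebesgue space `L²` of the circle. -/
abbrev L2 : Type := Lp ℂ 2 hm

/-- The Lebesgue space `L^∞` of the circle. -/
abbrev Linf : Type := Lp ℂ ⊤ hm

/-- The `n`-th Fourier coefficient, as a continuous linear functional on `L²`. -/
def coeffCLM (n : ℤ) : L2 →L[ℂ] ℂ :=
  LinearMap.mkContinuous
    { toFun := fun f => fourierBasis.repr f n
      map_add' := fun f g => by simp
      map_smul' := fun c f => by simp }
    1
    (fun f => by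
      rw [one_mul]
      calc ‖fourierBasis.repr f n‖ ≤ ‖fourierBasis.repr f‖ :=
            lp.norm_apply_le_norm (by norm_num) _ n
        _ = ‖f‖ := by simp)

/-- The Hardy space `H²`: the subspace of `L²` of functions whose negative Fourier
coefficients vanish. -/
def H2 : Submodule ℂ L2 := ⨅ n : {m : ℤ // m < 0}, LinearMap.ker (coeffCLM n.1).toLinearMap

theorem isClosed_H2 : IsClosed (H2 : Set L2) := by
  have h : ((H2 : Submodule ℂ L2) : Set L2)
      = ⋂ n : {m : ℤ // m < 0}, ↑(LinearMap.ker (coeffCLM n.1).toLinearMap) := Submodule.coe_iInf _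
  rw [h]
  exact isClosed_iInter fun n => ContinuousLinearMap.isClosed_ker _

instance : CompleteSpace H2 := isClosed_H2.completeSpace_coe

/-- The orthogonal (Szegő/Riesz) projection `P` of `L²` onto `H²`,
as an endomorphism of `L²`. -/
def Pp : L2 →L[ℂ] L2 := H2.subtypeL.comp (H2.orthogonalProjectionOnto)

/-- The `L²` function `f * g`, for `f ∈ L^∞` and `g ∈ L²`, is in `L²`. -/
theorem mulMem (f : Linf) (g : L2) : MemLp (⇑f • ⇑g) 2 hm :=
  (Lp.memLp g).smul (Lp.memLp f)

/-- Pointwise multiplication `g ↦ f g` of an `L²` function by an `L^∞` function. -/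
def mulFun (f : Linf) (g : L2) : L2 := (mulMem f g).toLp (⇑f • ⇑g)

theorem coeFn_mulFun (f : Linf) (g : L2) : mulFun f g =ᵐ[hm] ⇑f • ⇑g :=
  MemLp.coeFn_toLp _

theorem mulFun_add (f : Linf) (g₁ g₂ : L2) :
    mulFun f (g₁ + g₂) = mulFun f g₁ + mulFun f g₂ := by
  apply Lp.ext
  filter_upwards [coeFn_mulFun f (g₁ + g₂), coeFn_mulFun f g₁, coeFn_mulFun f g₂,
    Lp.coeFn_add (mulFun f g₁) (mulFun f g₂), Lp.coeFn_add g₁ g₂] with x h1 h2 h3 h4 h5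
  simp only [h1, h4, Pi.add_apply, h2, h3, Pi.smul_apply, h5, smul_eq_mul, Pi.mul_apply, mul_add]

theorem mulFun_smul (f : Linf) (c : ℂ) (g : L2) :
    mulFun f (c • g) = c • mulFun f g := by
  apply Lp.ext
  filter_upwards [coeFn_mulFun f (c • g), coeFn_mulFun f g,
    Lp.coeFn_smul c (mulFun f g), Lp.coeFn_smul c g] with x h1 h2 h3 h4
  simp only [h1, h3, Pi.smul_apply, h2, h4, smul_eq_mul, Pi.mul_apply]
  ring

theorem mulFun_norm (f : Linf) (g : L2) : ‖mulFun f g‖ ≤ ‖f‖ * ‖g‖ := by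
  rw [mulFun, Lp.norm_toLp]
  calc (eLpNorm (⇑f • ⇑g) 2 hm).toReal
      ≤ (eLpNorm (⇑f) ⊤ hm * eLpNorm (⇑g) 2 hm).toReal :=
        ENNReal.toReal_mono
          (ENNReal.mul_ne_top (Lp.eLpNorm_ne_top f) (Lp.eLpNorm_ne_top g))
          (eLpNorm_smul_le_eLpNorm_top_mul_eLpNorm 2 (Lp.aestronglyMeasurable g) ⇑f)
    _ = ‖f‖ * ‖g‖ := by rw [ENNReal.toReal_mul]; rfl

/-- The multiplication operator `M_f : L² → L²`, `g ↦ f g`, for a symbol `f ∈ L^∞`. -/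
def mulCL (f : Linf) : L2 →L[ℂ] L2 :=
  LinearMap.mkContinuous
    { toFun := mulFun f
      map_add' := mulFun_add f
      map_smul' := mulFun_smul f }
    ‖f‖ (mulFun_norm f)

/-- The product of two `L^∞` functions, as an element of `L^∞`. -/
def mulInf (f g : Linf) : Linf :=
  ((Lp.memLp g).smul (Lp.memLp f)).toLp (⇑f • ⇑g)

/-- The complex conjugate of an `Lᵖ` function. -/
def conjLp {p : ℝ≥0∞} (f : Lp ℂ p hm) : Lp ℂ p hm :=
  MemLp.toLp (fun x => conj (f x))
    (MemLp.of_le (Lp.memLp f)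
      (RCLike.continuous_conj.comp_aestronglyMeasurable (Lp.aestronglyMeasurable f))
      (Eventually.of_forall fun x => by simp))

/-- The embedding of `L^∞` into `L²` (the measure is finite). -/
def inclL2 (f : Linf) : L2 := MemLp.toLp ⇑f ((Lp.memLp f).mono_exponent le_top)

/-- The constant function `1` in `L^∞`. -/
def oneInf : Linf := Lp.const ⊤ hm (1 : ℂ)

/-- The constant function `1` in `L²`. -/
def oneL2 : L2 := Lp.const 2 hm (1 : ℂ)

/-- `f ∈ L^∞` is constant (a.e.). -/
def IsConst (f : Linf) : Prop := ∃ c : ℂ, f = Lp.const ⊤ hm c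

/-- `θ ∈ L^∞` is an inner function: it is analytic (i.e. lies in `H^∞ = H² ∩ L^∞`)
and has modulus `1` a.e. on the circle. -/
structure IsInner (θ : Linf) : Prop where
  analytic : inclL2 θ ∈ H2
  unimodular : ∀ᵐ x ∂hm, ‖θ x‖ = 1

/-- The complementary projection `I - P` of `L²` onto `[H²]^⊥`. -/
def Qm : L2 →L[ℂ] L2 := ContinuousLinearMap.id ℂ L2 - Pp

/-- The Toeplitz operator `T_f h = P (f h)` with symbol `f ∈ L^∞`, realized as the
endomorphism `P M_f P` of `L²` (i.e. extended by zero on `[H²]^⊥`). -/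
def toep (f : Linf) : L2 →L[ℂ] L2 := Pp ∘L mulCL f ∘L Pp

/-- The Hankel operator `H_f h = (I - P)(f h)` with symbol `f ∈ L^∞`, realized as the
operator `(I-P) M_f P` on `L²` (i.e. extended by zero on `[H²]^⊥`). -/
def hank (f : Linf) : L2 →L[ℂ] L2 := Qm ∘L mulCL f ∘L Pp

/-- The operator `S_f h = (I - P)(f h)` on `[H²]^⊥` with symbol `f ∈ L^∞`, realized as
`(I-P) M_f (I-P)` on `L²` (i.e. extended by zero on `H²`). -/
def sop (f : Linf) : L2 →L[ℂ] L2 := Qm ∘L mulCL f ∘L Qm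

/-- The rank one operator `x ⊗ y : h ↦ ⟨h, y⟩ x`. -/
def rankOne (x y : L2) : L2 →L[ℂ] L2 := (innerSL ℂ y).smulRight x

/-- The subspace `θ H²` of `L²`. -/
def thetaH2 (θ : Linf) : Submodule ℂ L2 := H2.map (mulCL θ).toLinearMap

/-- The model space `K_θ = H² ⊖ θH² = H² ∩ (θH²)^⊥`. -/
def Ktheta (θ : Linf) : Submodule ℂ L2 := H2 ⊓ (thetaH2 θ)ᗮ

/-- The orthogonal projection `P_θ` of `L²` onto the model space `K_θ`, given by the
formula `P_θ f = P f - θ P(conj θ · f)`. -/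
def Pth (θ : Linf) : L2 →L[ℂ] L2 := Pp - mulCL θ ∘L Pp ∘L mulCL (conjLp θ)

/-- The truncated Toeplitz operator `A^θ_φ u = P_θ(φ u)` with symbol `φ ∈ L²`, applied to a
bounded function `u` (in the statements, `u` ranges over `K_θ ∩ H^∞`). -/
def ttoepApply (θ : Linf) (φ : L2) (u : Linf) : L2 := Pth θ (mulCL u φ)

/-- The truncated Hankel operator `H^θ_φ u = (I - P_θ)(φ u)` with symbol `φ ∈ L²`, applied to
a bounded function `u` (in the statements, `u` ranges over `K_θ ∩ H^∞`). -/
def thankApply (θ : Linf) (φ : L2) (u : Linf) : L2 := mulCL u φ - Pth θ (mulCL u φ)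

/-- The truncated Toeplitz operator `A^θ_f = P_θ M_f P_θ` with bounded symbol `f ∈ L^∞`,
extended by zero on the orthogonal complement of `K_θ`. -/
def ttoep (θ f : Linf) : L2 →L[ℂ] L2 := Pth θ ∘L mulCL f ∘L Pth θ

/-- The truncated Hankel operator `H^θ_f = (I - P_θ) M_f P_θ` with bounded symbol `f ∈ L^∞`,
extended by zero on the orthogonal complement of `K_θ`. -/
def thank (θ f : Linf) : L2 →L[ℂ] L2 :=
  (ContinuousLinearMap.id ℂ L2 - Pth θ) ∘L mulCL f ∘L Pth θ

/-- The antiunitary operator `V` on `L²`: `(V f)(w) = conj w * conj (f w)`. -/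
def Vop (f : L2) : L2 := mulCL (fourierLp ⊤ (-1)) (conjLp f)

theorem negMP : MeasurePreserving (fun x : Circ => -x) hm hm :=
  Measure.measurePreserving_neg hm

/-- The unitary operator `U` on `L²`: `(U f)(w) = conj w * f (conj w)`. -/
def Uop (f : L2) : L2 :=
  mulCL (fourierLp ⊤ (-1)) (Lp.compMeasurePreserving (fun x : Circ => -x) negMP f)

/-- The normalized reproducing kernel `k_z(w) = √(1-|z|²) / (1 - conj z * w)` of `H²`,
as a continuous function on the circle (`w = e^{ix}`). -/
def kC (z : ℂ) (hz : ‖z‖ < 1) : C(Circ, ℂ) :=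
  ⟨fun x => (Real.sqrt (1 - ‖z‖ ^ 2) : ℂ) / (1 - conj z * fourier 1 x), by
    apply Continuous.div continuous_const
    · exact Continuous.sub continuous_const (Continuous.mul continuous_const (map_continuous _))
    · intro x
      refine sub_ne_zero.2 fun h => absurd (congrArg norm h) ?_
      have h1 : ‖fourier 1 x‖ = 1 := Circle.norm_coe _
      simp only [norm_mul, RCLike.norm_conj, h1, mul_one, norm_one]
      exact fun hc => absurd hc.symm (ne_of_lt hz)⟩

open Classical in
/-- The normalized reproducing kernel `k_z` as an element of `L²` (junk value `0` if `|z| ≥ 1`). -/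
def kLp (z : ℂ) : L2 :=
  if hz : ‖z‖ < 1 then ContinuousMap.toLp 2 hm ℂ (kC z hz) else 0

/-- The Möbius transform `φ_z(w) = (z - w)/(1 - conj z * w)`, as a continuous function. -/
def phiC (z : ℂ) (hz : ‖z‖ < 1) : C(Circ, ℂ) :=
  ⟨fun x => (z - fourier 1 x) / (1 - conj z * fourier 1 x), by
    apply Continuous.div
    · exact Continuous.sub continuous_const (map_continuous _)
    · exact Continuous.sub continuous_const (Continuous.mul continuous_const (map_continuous _))
    · intro x
      refine sub_ne_zero.2 fun h => absurd (congrArg norm h) ?_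
      have h1 : ‖fourier 1 x‖ = 1 := Circle.norm_coe _
      simp only [norm_mul, RCLike.norm_conj, h1, mul_one, norm_one]
      exact fun hc => absurd hc.symm (ne_of_lt hz)⟩

open Classical in
/-- The Möbius transform `φ_z` as an element of `L^∞` (junk value `0` if `|z| ≥ 1`). -/
def phiInf (z : ℂ) : Linf :=
  if hz : ‖z‖ < 1 then ContinuousMap.toLp ⊤ hm ℂ (phiC z hz) else 0

/-- The filter of tangential approach `|z| → 1⁻` inside the unit disk. -/
def toBoundary : Filter ℂ := Filter.comap (fun z => ‖z‖) (𝓝[<] (1 : ℝ))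

/-- Membership in `K_θ + ℂθ = {h ∈ H² : θ conj h ∈ H²}`. -/
def MemKC (θ : Linf) (h : L2) : Prop := h ∈ H2 ∧ mulCL θ (conjLp h) ∈ H2


open Complex

local notation "⟪" x ", " y "⟫" => @inner ℂ _ _ x y

/-- Fourier coefficient of an `L²` element, via the Hilbert basis. -/
abbrev fc (x : L2) (n : ℤ) : ℂ := fourierBasis.repr x n

theorem fc_eq (x : L2) (n : ℤ) : fc x n = fourierCoeff (⇑x) n := fourierBasis_repr x n

theorem fc_congr {h : Circ → ℂ} (x : L2) (hx : ⇑x =ᵐ[hm] h) (n : ℤ) :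
    fc x n = fourierCoeff h n := by
  rw [fc_eq]
  exact integral_congr_ae (hx.mono fun a ha => by simp only [ha])

theorem fc_ext {x y : L2} (h : ∀ n, fc x n = fc y n) : x = y :=
  fourierBasis.repr.injective (lp.ext (funext h))

theorem fourierBasis_eq (k : ℤ) : fourierBasis (T := 2 * Real.pi) k = fourierLp 2 k := by
  rw [← coe_fourierBasis]


theorem inner_fourier (x : L2) (k : ℤ) : ⟪fourierLp 2 k, x⟫ = fc x k := by
  rw [← fourierBasis_eq, fc, fourierBasis.repr_apply_apply]

theorem fc_fourierLp (k n : ℤ) : fc (fourierLp 2 k) n = if n = k then 1 else 0 := by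
  rw [← inner_fourier]
  exact orthonormal_iff_ite.mp orthonormal_fourier n k

theorem inner_fourier' (x : L2) (k : ℤ) : ⟪x, fourierLp 2 k⟫ = conj (fc x k) := by
  rw [← inner_fourier, ← inner_conj_symm]

theorem coeffCLM_eq (x : L2) (n : ℤ) : coeffCLM n x = fc x n := rfl

theorem mem_H2_iff {x : L2} : x ∈ H2 ↔ ∀ n < 0, fc x n = 0 := by
  constructor
  · intro hx n hn
    have := (Submodule.mem_iInf _).mp hx ⟨n, hn⟩
    simpa [LinearMap.mem_ker, coeffCLM_eq] using this
  · intro h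
    refine (Submodule.mem_iInf _).mpr fun n => ?_
    simpa [LinearMap.mem_ker, coeffCLM_eq] using h n.1 n.2

theorem fourier_mem_H2 {k : ℤ} (hk : 0 ≤ k) : fourierLp 2 k ∈ H2 :=
  mem_H2_iff.mpr fun n hn => by
    rw [fc_fourierLp]
    simp only [ite_eq_right_iff]
    intro h; omega

theorem Pp_apply (x : L2) : Pp x = (H2.orthogonalProjectionOnto x : L2) := rfl

theorem Pp_mem (x : L2) : Pp x ∈ H2 := by rw [Pp_apply]; exact SetLike.coe_mem _

theorem fc_Pp (x : L2) (n : ℤ) : fc (Pp x) n = if 0 ≤ n then fc x n else 0 := by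
  split
  · have horth := Submodule.sub_starProjection_mem_orthogonal (K := H2) x
    have h0 : ⟪fourierLp 2 n, x - Pp x⟫ = 0 :=
      (Submodule.mem_orthogonal H2 _).mp horth _ (fourier_mem_H2 ‹0 ≤ n›)
    rw [inner_fourier] at h0
    have h1 : fc x n - fc (Pp x) n = 0 := by
      rw [← h0, fc, fc, fc, map_sub]; rfl
    exact (sub_eq_zero.mp h1).symm
  · exact mem_H2_iff.mp (Pp_mem x) n (lt_of_not_ge ‹¬ 0 ≤ n›)

theorem Pp_eq_self {x : L2} (hx : x ∈ H2) : Pp x = x := by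
  apply fc_ext
  intro n
  rw [fc_Pp]
  split
  · rfl
  · exact (mem_H2_iff.mp hx n (lt_of_not_ge ‹_›)).symm

theorem Pp_idem (x : L2) : Pp (Pp x) = Pp x := Pp_eq_self (Pp_mem x)

theorem Qm_apply (x : L2) : Qm x = x - Pp x := rfl

theorem fc_Qm (x : L2) (n : ℤ) : fc (Qm x) n = if n < 0 then fc x n else 0 := by
  have : fc (Qm x) n = fc x n - fc (Pp x) n := by
    rw [Qm_apply, fc, fc, fc, map_sub]; rfl
  rw [this, fc_Pp]
  split <;> split <;> first | omega | ring

theorem clm_ext {A B : L2 →L[ℂ] L2} (h : ∀ k, A (fourierLp 2 k) = B (fourierLp 2 k)) :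
    A = B := by
  refine ContinuousLinearMap.ext_on (s := Set.range (fourierLp (T := 2 * Real.pi) 2))
    (Submodule.dense_iff_topologicalClosure_eq_top.mpr
      (span_fourierLp_closure_eq_top (by norm_num))) ?_
  rintro _ ⟨k, rfl⟩
  exact h k

/- ### Function-level Fourier coefficient machinery -/

theorem contIntegrable {f : Circ → ℂ} (hf : Continuous f) : Integrable f hm := by
  have h1 : Integrable (⇑(ContinuousMap.toLp (E := ℂ) 1 hm ℂ ⟨f, hf⟩)) hm :=
    L1.integrable_coeFn _
  exact h1.congr (ContinuousMap.coeFn_toLp (p := 1) (μ := hm) (𝕜 := ℂ) ⟨f, hf⟩)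

theorem fourierCoeff_congr_ae {f g : Circ → ℂ} (h : f =ᵐ[hm] g) (n : ℤ) :
    fourierCoeff f n = fourierCoeff g n :=
  integral_congr_ae (h.mono fun a ha => by simp only [ha])

theorem fourier_nat_pow (j : ℕ) (x : Circ) :
    fourier (T := 2 * Real.pi) (j : ℤ) x = (fourier 1 x) ^ j := by
  induction j with
  | zero => simp [fourier_zero]
  | succ j ih =>
      have : ((j : ℤ) + 1) = (j : ℤ) + 1 := rfl
      push_cast
      rw [fourier_add, ih, pow_succ]

theorem fourier_neg_arg (m : ℤ) (x : Circ) :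
    fourier (T := 2 * Real.pi) m (-x) = fourier (-m) x := by
  have h1 : fourier (T := 2 * Real.pi) m (-x) = AddCircle.toCircle (m • (-x) :) := fourier_apply
  rw [h1, smul_neg, fourier_neg', ← fourier_neg]

theorem fourierCoeff_fourier_mul (f : Circ → ℂ) (k m : ℤ) :
    fourierCoeff (fun x => fourier k x * f x) m = fourierCoeff f (m - k) := by
  unfold fourierCoeff
  refine integral_congr_ae (Eventually.of_forall fun x => ?_)
  have hmk : (-m) + k = -(m - k) := by ring
  simp only [smul_eq_mul, ← mul_assoc, ← fourier_add, hmk]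

theorem fourierCoeff_conj (f : Circ → ℂ) (m : ℤ) :
    fourierCoeff (fun x => conj (f x)) m = conj (fourierCoeff f (-m)) := by
  unfold fourierCoeff
  rw [← integral_conj]
  refine integral_congr_ae (Eventually.of_forall fun x => ?_)
  simp only [smul_eq_mul, map_mul, ← fourier_neg, neg_neg]

theorem fourierCoeff_comp_neg (f : Circ → ℂ) (m : ℤ) :
    fourierCoeff (fun x => f (-x)) m = fourierCoeff f (-m) := by
  have hMP : MeasurePreserving (⇑(MeasurableEquiv.neg Circ)) hm hm := negMP
  have key := MeasurePreserving.integral_comp' (f := MeasurableEquiv.neg Circ) hMP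
    (fun y => fourier m y • f y)
  unfold fourierCoeff
  rw [neg_neg, ← key]
  refine integral_congr_ae (Eventually.of_forall fun x => ?_)
  simp only [MeasurableEquiv.neg_apply, fourier_neg_arg]

theorem fourierCoeff_sub' {f g : Circ → ℂ} (hf : Continuous f) (hg : Continuous g) (m : ℤ) :
    fourierCoeff (fun x => f x - g x) m = fourierCoeff f m - fourierCoeff g m := by
  unfold fourierCoeff
  rw [← integral_sub (contIntegrable (f := fun t => fourier (-m) t • f t) ((map_continuous (fourier (-m))).smul hf))
    (contIntegrable (f := fun t => fourier (-m) t • g t) ((map_continuous (fourier (-m))).smul hg))]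
  exact integral_congr_ae (Eventually.of_forall fun x => smul_sub _ _ _)

/- ### The geometric kernel and its Fourier coefficients -/

theorem denom_ne (z : ℂ) (hz : ‖z‖ < 1) (x : Circ) : (1 : ℂ) - conj z * fourier 1 x ≠ 0 := by
  refine sub_ne_zero.2 fun h => absurd (congrArg norm h) ?_
  have h1 : ‖fourier (T := 2 * Real.pi) 1 x‖ = 1 := Circle.norm_coe _
  simp only [norm_mul, RCLike.norm_conj, h1, mul_one, norm_one]
  exact fun hc => absurd hc.symm (ne_of_lt hz)

/-- The geometric (Szegő) kernel `x ↦ (1 - conj z * w)⁻¹`. -/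
def gC (z : ℂ) (hz : ‖z‖ < 1) : C(Circ, ℂ) :=
  ⟨fun x => (1 - conj z * fourier 1 x)⁻¹, by
    apply Continuous.inv₀
    · exact Continuous.sub continuous_const (Continuous.mul continuous_const (map_continuous _))
    · exact denom_ne z hz⟩

theorem hasSum_gC (z : ℂ) (hz : ‖z‖ < 1) :
    HasSum (fun j : ℕ => (conj z) ^ j • (fourier (j : ℤ) : C(Circ, ℂ))) (gC z hz) := by
  have hnorm : ∀ j : ℕ, ‖(conj z) ^ j • (fourier (j : ℤ) : C(Circ, ℂ))‖ ≤ ‖z‖ ^ j := by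
    intro j
    rw [norm_smul, norm_pow, RCLike.norm_conj]
    have h1 : ‖(fourier (j : ℤ) : C(Circ, ℂ))‖ ≤ 1 := by
      refine (ContinuousMap.norm_le _ zero_le_one).2 fun x => ?_
      exact le_of_eq (Circle.norm_coe _)
    calc ‖z‖ ^ j * ‖(fourier (j : ℤ) : C(Circ, ℂ))‖ ≤ ‖z‖ ^ j * 1 := by
          exact mul_le_mul_of_nonneg_left h1 (by positivity)
      _ = ‖z‖ ^ j := mul_one _
  have hsum : Summable (fun j : ℕ => (conj z) ^ j • (fourier (j : ℤ) : C(Circ, ℂ))) :=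
    Summable.of_norm (Summable.of_nonneg_of_le (fun j => norm_nonneg _) hnorm
      (summable_geometric_of_lt_one (norm_nonneg z) hz))
  have hS := hsum.hasSum
  suffices h : (∑' j : ℕ, (conj z) ^ j • (fourier (j : ℤ) : C(Circ, ℂ))) = gC z hz by
    rwa [h] at hS
  ext x
  have h1 := hS.mapL (ContinuousMap.evalCLM (R := ℂ) x)
  have h2 : HasSum (fun j : ℕ => (conj z * fourier 1 x) ^ j)
      ((1 - conj z * fourier 1 x)⁻¹) := by
    apply hasSum_geometric_of_norm_lt_one
    have h1 : ‖fourier (T := 2 * Real.pi) 1 x‖ = 1 := Circle.norm_coe _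
    rw [norm_mul, RCLike.norm_conj, h1, mul_one]; exact hz
  have h3 : (fun j : ℕ => (conj z * fourier 1 x) ^ j)
      = fun j : ℕ => (ContinuousMap.evalCLM (R := ℂ) x) ((conj z) ^ j • (fourier (j : ℤ) : C(Circ, ℂ))) := by
    funext j
    simp only [ContinuousMap.evalCLM, ContinuousLinearMap.comp_apply]
    simp only [mul_pow, ← fourier_nat_pow]
    rfl
  rw [h3] at h2
  exact (h2.unique h1).symm

theorem fc_toLp_gC (z : ℂ) (hz : ‖z‖ < 1) (n : ℤ) :
    fc (ContinuousMap.toLp (E := ℂ) 2 hm ℂ (gC z hz)) n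
      = if 0 ≤ n then (conj z) ^ n.toNat else 0 := by
  classical
  have h1 := ((hasSum_gC z hz).mapL (ContinuousMap.toLp (E := ℂ) 2 hm ℂ)).mapL (coeffCLM n)
  have h2 : (fun j : ℕ => (coeffCLM n) ((ContinuousMap.toLp (E := ℂ) 2 hm ℂ)
      ((conj z) ^ j • (fourier (j : ℤ) : C(Circ, ℂ)))))
      = fun j : ℕ => if j = n.toNat ∧ 0 ≤ n then (conj z) ^ n.toNat else 0 := by
    funext j
    rw [_root_.map_smul, _root_.map_smul]
    have : (ContinuousMap.toLp (E := ℂ) 2 hm ℂ) (fourier (j : ℤ)) = fourierLp 2 (j : ℤ) := rfl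
    rw [this]
    have h3 : coeffCLM n (fourierLp 2 (j : ℤ)) = if n = (j : ℤ) then 1 else 0 := by
      rw [coeffCLM_eq, fc_fourierLp]
    rw [h3]
    by_cases hj : n = (j : ℤ)
    · have h0 : 0 ≤ n := hj ▸ Int.natCast_nonneg j
      have hjn : j = n.toNat := by omega
      rw [if_pos hj, if_pos ⟨hjn, h0⟩, smul_eq_mul, mul_one, hjn]
    · have : ¬ (j = n.toNat ∧ 0 ≤ n) := by
        rintro ⟨rfl, h0⟩; exact hj (by omega)
      rw [if_neg hj, if_neg this, smul_zero]
  rw [h2] at h1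
  by_cases hn : 0 ≤ n
  · simp only [hn, and_true] at h1
    rw [if_pos hn]
    exact ((hasSum_ite_eq n.toNat ((conj z) ^ n.toNat)).unique h1).symm ▸
      ((hasSum_ite_eq n.toNat ((conj z) ^ n.toNat)).unique h1).symm
  · simp only [hn, and_false, if_false] at h1
    rw [if_neg hn]
    exact (hasSum_zero.unique h1).symm


/- ### Coefficients of the concrete kernels -/

theorem fourierCoeff_gC (z : ℂ) (hz : ‖z‖ < 1) (n : ℤ) :
    fourierCoeff ⇑(gC z hz) n = if 0 ≤ n then (conj z) ^ n.toNat else 0 := by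
  rw [← fc_toLp_gC z hz n]
  exact (fc_congr (ContinuousMap.toLp (E := ℂ) 2 hm ℂ (gC z hz))
    (ContinuousMap.coeFn_toLp (𝕜 := ℂ) hm (gC z hz)) n).symm

theorem fc_smul (c : ℂ) (x : L2) (n : ℤ) : fc (c • x) n = c * fc x n := by
  rw [fc, _root_.map_smul]; rfl

theorem fc_neg (x : L2) (n : ℤ) : fc (-x) n = - fc x n := by
  rw [fc, map_neg]; rfl

theorem fc_add (x y : L2) (n : ℤ) : fc (x + y) n = fc x n + fc y n := by
  rw [fc, map_add]; rfl

theorem coeFn_kLp (z : ℂ) (hz : ‖z‖ < 1) : ⇑(kLp z) =ᵐ[hm] ⇑(kC z hz) := by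
  rw [kLp, dif_pos hz]
  exact ContinuousMap.coeFn_toLp (𝕜 := ℂ) hm (kC z hz)

theorem normSq_eq (z : ℂ) : ((Complex.normSq z : ℝ) : ℂ) = ((‖z‖ ^ 2 : ℝ) : ℂ) := by
  rw [Complex.normSq_eq_norm_sq]

theorem fourierCoeff_kC (z : ℂ) (hz : ‖z‖ < 1) (n : ℤ) :
    fourierCoeff ⇑(kC z hz) n
      = if 0 ≤ n then ((Real.sqrt (1 - ‖z‖ ^ 2) : ℝ) : ℂ) * (conj z) ^ n.toNat else 0 := by
  have h1 : ⇑(kC z hz) = fun x => ((Real.sqrt (1 - ‖z‖ ^ 2) : ℝ) : ℂ) * (gC z hz x) :=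
    funext fun x => div_eq_mul_inv _ _
  rw [h1, fourierCoeff.const_mul, fourierCoeff_gC]
  split <;> simp

theorem fc_kLp (z : ℂ) (hz : ‖z‖ < 1) (n : ℤ) :
    fc (kLp z) n
      = if 0 ≤ n then ((Real.sqrt (1 - ‖z‖ ^ 2) : ℝ) : ℂ) * (conj z) ^ n.toNat else 0 := by
  rw [fc_congr _ (coeFn_kLp z hz), fourierCoeff_kC]

theorem coeFn_phiInf (z : ℂ) (hz : ‖z‖ < 1) : ⇑(phiInf z) =ᵐ[hm] ⇑(phiC z hz) := by
  rw [phiInf, dif_pos hz]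
  exact ContinuousMap.coeFn_toLp (𝕜 := ℂ) hm (phiC z hz)

theorem fourierCoeff_phi (z : ℂ) (hz : ‖z‖ < 1) (m : ℤ) :
    fourierCoeff ⇑(phiInf z) m
      = (if m = 0 then z else 0)
        + (if 1 ≤ m then (((‖z‖ : ℝ) ^ 2 - 1 : ℝ) : ℂ) * (conj z) ^ (m - 1).toNat else 0) := by
  rw [fourierCoeff_congr_ae (coeFn_phiInf z hz)]
  have h1 : ⇑(phiC z hz) = fun x => (z * gC z hz x) - (fourier 1 x * gC z hz x) := by
    funext x
    show (z - fourier 1 x) / (1 - conj z * fourier 1 x) = _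
    rw [sub_div, div_eq_mul_inv, div_eq_mul_inv]; rfl
  rw [h1, fourierCoeff_sub' (f := fun x => z * gC z hz x) (g := fun x => fourier 1 x * gC z hz x) (continuous_const.mul (map_continuous _))
    ((map_continuous _).mul (map_continuous _)), fourierCoeff.const_mul,
    fourierCoeff_fourier_mul, fourierCoeff_gC, fourierCoeff_gC]
  rcases lt_trichotomy m 0 with hm | hm | hm
  · rw [if_neg (show ¬(0:ℤ) ≤ m by omega), if_neg (show ¬(0:ℤ) ≤ m - 1 by omega),
      if_neg (show ¬(m = 0) by omega), if_neg (show ¬(1:ℤ) ≤ m by omega)]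
    ring
  · subst hm
    norm_num
  · rw [if_pos (show (0:ℤ) ≤ m by omega), if_pos (show (0:ℤ) ≤ m - 1 by omega),
      if_neg (show ¬(m = 0) by omega), if_pos (show (1:ℤ) ≤ m by omega)]
    have h2 : m.toNat = (m - 1).toNat + 1 := by omega
    rw [h2, pow_succ, zero_add]
    calc z * ((conj z) ^ (m - 1).toNat * conj z) - (conj z) ^ (m - 1).toNat
        = (z * conj z) * (conj z) ^ (m - 1).toNat - (conj z) ^ (m - 1).toNat := by ring
      _ = _ := by rw [Complex.mul_conj, normSq_eq]; push_cast; ring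

theorem coeFn_conjLp {p : ℝ≥0∞} (f : Lp ℂ p hm) :
    ⇑(conjLp f) =ᵐ[hm] fun x => conj (f x) :=
  MemLp.coeFn_toLp _

theorem fourierCoeff_conj_phi (z : ℂ) (hz : ‖z‖ < 1) (m : ℤ) :
    fourierCoeff ⇑(conjLp (phiInf z)) m = conj (fourierCoeff ⇑(phiInf z) (-m)) := by
  rw [fourierCoeff_congr_ae (coeFn_conjLp (phiInf z)), fourierCoeff_conj]

theorem mulCL_apply (a : Linf) (x : L2) : mulCL a x = mulFun a x := rfl

theorem coeFn_mulCL (a : Linf) (x : L2) : ⇑(mulCL a x) =ᵐ[hm] ⇑a • ⇑x := coeFn_mulFun a x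

theorem fc_mulCL_fourier (a : Linf) (k n : ℤ) :
    fc (mulCL a (fourierLp 2 k)) n = fourierCoeff ⇑a (n - k) := by
  have h0 : ⇑(mulCL a (fourierLp 2 k)) =ᵐ[hm] fun x => fourier k x * a x := by
    filter_upwards [coeFn_mulCL a (fourierLp 2 k), coeFn_fourierLp 2 k] with x h1 h2
    rw [h1, Pi.smul_apply', smul_eq_mul, h2, mul_comm]
  rw [fc_congr _ h0, fourierCoeff_fourier_mul]

theorem fc_Uop (F : L2) (n : ℤ) : fc (Uop F) n = fourierCoeff ⇑F (-(n + 1)) := by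
  have h0 : ⇑(Uop F) =ᵐ[hm] fun x => fourier (-1) x * F (-x) := by
    unfold Uop
    filter_upwards [coeFn_mulCL (fourierLp ⊤ (-1))
        (Lp.compMeasurePreserving (fun x : Circ => -x) negMP F),
      coeFn_fourierLp ⊤ (-1),
      Lp.coeFn_compMeasurePreserving F negMP] with x h1 h2 h3
    rw [h1, Pi.smul_apply', smul_eq_mul, h2, h3]
    rfl
  rw [fc_congr _ h0, fourierCoeff_fourier_mul (fun x => F (-x)) (-1) n,
    fourierCoeff_comp_neg]
  norm_num

theorem fc_u0 (z : ℂ) (hz : ‖z‖ < 1) (n : ℤ) :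
    fc (Uop (kLp (conj z))) n
      = if n < 0 then ((Real.sqrt (1 - ‖z‖ ^ 2) : ℝ) : ℂ) * z ^ (-n - 1).toNat else 0 := by
  have hz' : ‖conj z‖ < 1 := by rwa [RCLike.norm_conj]
  rw [fc_Uop, fourierCoeff_congr_ae (coeFn_kLp (conj z) hz'), fourierCoeff_kC (conj z) hz']
  rw [RCLike.norm_conj, Complex.conj_conj]
  have h1 : (0 ≤ -(n + 1)) ↔ n < 0 := by omega
  have h2 : (-(n + 1)).toNat = (-n - 1).toNat := by omega
  simp only [h1, h2]

/- ### Pointwise multiplicative identities -/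

theorem fc_zero (n : ℤ) : fc (0 : L2) n = 0 := by rw [fc, map_zero]; rfl

theorem mulCL_comm (a b : Linf) (x : L2) : mulCL a (mulCL b x) = mulCL b (mulCL a x) := by
  apply Lp.ext
  filter_upwards [coeFn_mulCL a (mulCL b x), coeFn_mulCL b x,
    coeFn_mulCL b (mulCL a x), coeFn_mulCL a x] with t h1 h2 h3 h4
  simp only [Pi.smul_apply', smul_eq_mul] at h1 h2 h3 h4
  rw [h1, h2, h3, h4]
  ring

theorem fourier_mul_conj_self (t : Circ) :
    (fourier 1 t : ℂ) * conj (fourier 1 t) = 1 := by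
  rw [Complex.mul_conj]
  have h : Complex.normSq (fourier 1 t) = 1 := by
    have h2 : ‖(fourier 1 t : ℂ)‖ = 1 := Circle.norm_coe _
    rw [← Complex.sq_norm, h2]
    norm_num
  rw [h]
  norm_num

theorem phiC_mul_conj (z : ℂ) (hz : ‖z‖ < 1) (t : Circ) :
    phiC z hz t * conj (phiC z hz t) = 1 := by
  have hw := fourier_mul_conj_self t
  set w : ℂ := fourier 1 t with hwdef
  have d1 : (1 : ℂ) - conj z * w ≠ 0 := denom_ne z hz t
  have d2 : (1 : ℂ) - z * conj w ≠ 0 := by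
    intro h
    apply d1
    have := congrArg conj h
    simpa using this
  show (z - w) / (1 - conj z * w) * conj ((z - w) / (1 - conj z * w)) = 1
  rw [map_div₀, map_sub, map_sub, map_mul, Complex.conj_conj, map_one]
  rw [div_mul_div_comm, div_eq_one_iff_eq (mul_ne_zero d1 d2)]
  linear_combination (1 - z * conj z) * hw

theorem phi_mul_conj_phi (z : ℂ) (hz : ‖z‖ < 1) (x : L2) :
    mulCL (phiInf z) (mulCL (conjLp (phiInf z)) x) = x := by
  apply Lp.ext
  filter_upwards [coeFn_mulCL (phiInf z) (mulCL (conjLp (phiInf z)) x),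
    coeFn_mulCL (conjLp (phiInf z)) x, coeFn_phiInf z hz,
    coeFn_conjLp (phiInf z)] with t h1 h2 h3 h4
  rw [h1, Pi.smul_apply', smul_eq_mul, h2, Pi.smul_apply', smul_eq_mul, h4, h3]
  calc phiC z hz t * (conj (phiC z hz t) * x t)
      = (phiC z hz t * conj (phiC z hz t)) * x t := by ring
    _ = x t := by rw [phiC_mul_conj z hz t, one_mul]

theorem coeFn_Uop (F : L2) : ⇑(Uop F) =ᵐ[hm] fun x => fourier (-1) x * F (-x) := by
  unfold Uop
  filter_upwards [coeFn_mulCL (fourierLp ⊤ (-1))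
      (Lp.compMeasurePreserving (fun x : Circ => -x) negMP F),
    coeFn_fourierLp ⊤ (-1),
    Lp.coeFn_compMeasurePreserving F negMP] with x h1 h2 h3
  rw [h1, Pi.smul_apply', smul_eq_mul, h2, h3]
  rfl

theorem phi_mul_u0 (z : ℂ) (hz : ‖z‖ < 1) :
    mulCL (phiInf z) (Uop (kLp (conj z))) = - kLp z := by
  have hz' : ‖conj z‖ < 1 := by rwa [RCLike.norm_conj]
  have hcomp : (fun x : Circ => (kLp (conj z) : Circ → ℂ) (-x))
      =ᵐ[hm] (fun x : Circ => kC (conj z) hz' (-x)) := by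
    have := Measure.QuasiMeasurePreserving.ae_eq_comp
      (negMP.quasiMeasurePreserving) (coeFn_kLp (conj z) hz')
    exact this
  apply Lp.ext
  filter_upwards [coeFn_mulCL (phiInf z) (Uop (kLp (conj z))),
    coeFn_Uop (kLp (conj z)), coeFn_phiInf z hz, hcomp,
    Lp.coeFn_neg (kLp z), coeFn_kLp z hz] with t h1 h2 h3 h4 h5 h6
  rw [h1, Pi.smul_apply', smul_eq_mul, h2, h3, h4, h5, Pi.neg_apply, h6]
  have hw := fourier_mul_conj_self t
  set w : ℂ := fourier 1 t with hwdef
  have hfneg : (fourier (-1) t : ℂ) = conj w := by rw [hwdef, ← fourier_neg]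
  have hfnegarg : (fourier 1 (-t) : ℂ) = conj w := by rw [fourier_neg_arg, hfneg]
  have d1 : (1 : ℂ) - conj z * w ≠ 0 := denom_ne z hz t
  have d2 : (1 : ℂ) - z * conj w ≠ 0 := by
    intro h
    apply d1
    have := congrArg conj h
    simpa using this
  show phiC z hz t * (fourier (-1) t * kC (conj z) hz' (-t)) = -(kC z hz t)
  show (z - w) / (1 - conj z * w) * (fourier (-1) t
    * ((Real.sqrt (1 - ‖conj z‖ ^ 2) : ℂ) / (1 - conj (conj z) * fourier 1 (-t))))
      = -((Real.sqrt (1 - ‖z‖ ^ 2) : ℂ) / (1 - conj z * w))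
  rw [hfneg, hfnegarg, Complex.conj_conj, RCLike.norm_conj]
  set s : ℂ := (Real.sqrt (1 - ‖z‖ ^ 2) : ℂ)
  have d1' : (1:ℂ) - w * conj z ≠ 0 := by rwa [mul_comm]
  field_simp
  linear_combination (-s) * hw

/- ### Projection identities for the basis vectors -/

theorem Pp_fourier_of_nonneg {k : ℤ} (hk : 0 ≤ k) : Pp (fourierLp 2 k) = fourierLp 2 k :=
  Pp_eq_self (fourier_mem_H2 hk)

theorem Pp_fourier_of_neg {k : ℤ} (hk : k < 0) : Pp (fourierLp 2 k) = 0 := by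
  apply fc_ext
  intro n
  rw [fc_Pp, fc_fourierLp, fc_zero]
  split
  · split
    · omega
    · rfl
  · rfl

theorem rankOne_apply (x y v : L2) : rankOne x y v = ⟪y, v⟫ • x := by
  simp only [rankOne, ContinuousLinearMap.smulRight_apply, innerSL_apply_apply]

theorem inner_Pp (x y : L2) : ⟪Pp x, y⟫ = ⟪x, Pp y⟫ :=
  Submodule.inner_starProjection_left_eq_right H2 x y

/- ### The five key operator identities -/

theorem sqrt_sq (z : ℂ) (hz : ‖z‖ < 1) :
    ((Real.sqrt (1 - ‖z‖ ^ 2) : ℝ) : ℂ) * ((Real.sqrt (1 - ‖z‖ ^ 2) : ℝ) : ℂ)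
      = ((1 - ‖z‖ ^ 2 : ℝ) : ℂ) := by
  rw [← Complex.ofReal_mul, Real.mul_self_sqrt (by nlinarith [norm_nonneg z])]

theorem E4 (z : ℂ) (hz : ‖z‖ < 1) : Qm ∘L mulCL (phiInf z) ∘L Pp = 0 := by
  apply clm_ext
  intro k
  simp only [ContinuousLinearMap.comp_apply, ContinuousLinearMap.zero_apply]
  rcases lt_or_ge k 0 with hk | hk
  · rw [Pp_fourier_of_neg hk, map_zero, map_zero]
  · rw [Pp_fourier_of_nonneg hk]
    apply fc_ext
    intro n
    rw [fc_Qm, fc_zero]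
    split
    · rw [fc_mulCL_fourier, fourierCoeff_phi z hz,
        if_neg (show ¬(n - k = 0) by omega), if_neg (show ¬(1:ℤ) ≤ n - k by omega)]
      ring
    · rfl

theorem E5 (z : ℂ) (hz : ‖z‖ < 1) :
    Qm ∘L mulCL (conjLp (phiInf z)) ∘L Pp
      = - rankOne (Uop (kLp (conj z))) (kLp z) := by
  apply clm_ext
  intro k
  simp only [ContinuousLinearMap.comp_apply, ContinuousLinearMap.neg_apply]
  rcases lt_or_ge k 0 with hk | hk
  · rw [Pp_fourier_of_neg hk, map_zero, map_zero, rankOne_apply, inner_fourier',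
      fc_kLp z hz, if_neg (by omega), map_zero, zero_smul, neg_zero]
  · rw [Pp_fourier_of_nonneg hk, rankOne_apply, inner_fourier', fc_kLp z hz, if_pos hk]
    apply fc_ext
    intro n
    rw [fc_Qm, fc_neg, fc_smul, fc_u0 z hz]
    rcases lt_or_ge n 0 with hn | hn
    · rw [if_pos hn, if_pos hn, fc_mulCL_fourier, fourierCoeff_conj_phi z hz,
        show -(n - k) = k - n by ring, fourierCoeff_phi z hz,
        if_neg (show ¬(k - n = 0) by omega), if_pos (show (1:ℤ) ≤ k - n by omega), zero_add]
      simp only [map_mul, map_pow, Complex.conj_conj, Complex.conj_ofReal]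
      have hexp : (k - n - 1).toNat = k.toNat + (-n - 1).toNat := by omega
      rw [hexp, pow_add]
      have := sqrt_sq z hz
      push_cast at this ⊢
      linear_combination (z ^ k.toNat * z ^ (-n - 1).toNat) * this
    · rw [if_neg (by omega), if_neg (by omega), mul_zero, neg_zero]


theorem E6 (z : ℂ) (hz : ‖z‖ < 1) :
    Pp ∘L mulCL (phiInf z) ∘L Qm = - rankOne (kLp z) (Uop (kLp (conj z))) := by
  apply clm_ext
  intro k
  simp only [ContinuousLinearMap.comp_apply, ContinuousLinearMap.neg_apply]
  rcases lt_or_ge k 0 with hk | hk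
  · rw [Qm_apply, Pp_fourier_of_neg hk, sub_zero, rankOne_apply, inner_fourier',
      fc_u0 z hz, if_pos hk]
    apply fc_ext
    intro n
    rw [fc_Pp, fc_neg, fc_smul, fc_kLp z hz]
    rcases le_or_gt 0 n with hn | hn
    · rw [if_pos hn, if_pos hn, fc_mulCL_fourier, fourierCoeff_phi z hz,
        if_neg (show ¬(n - k = 0) by omega), if_pos (show (1:ℤ) ≤ n - k by omega), zero_add]
      simp only [map_mul, map_pow, Complex.conj_conj, Complex.conj_ofReal]
      have hexp : (n - k - 1).toNat = (-k - 1).toNat + n.toNat := by omega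
      rw [hexp, pow_add]
      have := sqrt_sq z hz
      push_cast at this ⊢
      linear_combination ((conj z) ^ (-k - 1).toNat * (conj z) ^ n.toNat) * this
    · rw [if_neg (by omega), if_neg (by omega), mul_zero, neg_zero]
  · rw [Qm_apply, Pp_fourier_of_nonneg hk, sub_self, map_zero, map_zero, rankOne_apply,
      inner_fourier', fc_u0 z hz, if_neg (by omega), map_zero, zero_smul, neg_zero]

theorem E7 (z : ℂ) (hz : ‖z‖ < 1) : Pp (kLp z) = kLp z :=
  Pp_eq_self (mem_H2_iff.mpr fun n hn => by rw [fc_kLp z hz, if_neg (by omega)])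

theorem E8 (z : ℂ) (hz : ‖z‖ < 1) : Pp (Uop (kLp (conj z))) = 0 := by
  apply fc_ext
  intro n
  rw [fc_Pp, fc_u0 z hz, fc_zero]
  rcases le_or_gt 0 n with hn | hn
  · rw [if_pos hn, if_neg (by omega)]
  · rw [if_neg (by omega)]

/- ### Element-level corollaries -/

theorem Qm_idem (v : L2) : Qm (Qm v) = Qm v := by
  rw [Qm_apply (Qm v), Qm_apply v, map_sub, Pp_idem, sub_self, sub_zero]

theorem Qm_Pp (v : L2) : Qm (Pp v) = 0 := by
  rw [Qm_apply, Pp_idem, sub_self]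

theorem Pp_Qm (v : L2) : Pp (Qm v) = 0 := by
  rw [Qm_apply, map_sub, Pp_idem, sub_self]

theorem Pp_add_Qm (v : L2) : Pp v + Qm v = v := by
  rw [Qm_apply]; abel

theorem E4e (z : ℂ) (hz : ‖z‖ < 1) (v : L2) : Qm (mulCL (phiInf z) (Pp v)) = 0 := by
  have h := ContinuousLinearMap.ext_iff.mp (E4 z hz) v
  simpa only [ContinuousLinearMap.comp_apply, ContinuousLinearMap.zero_apply] using h

theorem E5e (z : ℂ) (hz : ‖z‖ < 1) (v : L2) :
    Qm (mulCL (conjLp (phiInf z)) (Pp v)) = -(⟪kLp z, v⟫ • Uop (kLp (conj z))) := by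
  have h := ContinuousLinearMap.ext_iff.mp (E5 z hz) v
  simpa only [ContinuousLinearMap.comp_apply, ContinuousLinearMap.neg_apply,
    rankOne_apply] using h

theorem E6e (z : ℂ) (hz : ‖z‖ < 1) (r : L2) :
    Pp (mulCL (phiInf z) (Qm r)) = -(⟪Uop (kLp (conj z)), r⟫ • kLp z) := by
  have h := ContinuousLinearMap.ext_iff.mp (E6 z hz) r
  simpa only [ContinuousLinearMap.comp_apply, ContinuousLinearMap.neg_apply,
    rankOne_apply] using h

theorem QmMphiQm (z : ℂ) (hz : ‖z‖ < 1) (r : L2) :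
    Qm (mulCL (phiInf z) (Qm r)) = Qm (mulCL (phiInf z) r) := by
  rw [Qm_apply r, map_sub, map_sub, E4e z hz, sub_zero]

theorem MphiQm (z : ℂ) (hz : ‖z‖ < 1) (r : L2) :
    mulCL (phiInf z) (Qm r)
      = -(⟪Uop (kLp (conj z)), r⟫ • kLp z) + Qm (mulCL (phiInf z) r) := by
  rw [← Pp_add_Qm (mulCL (phiInf z) (Qm r)), E6e z hz, QmMphiQm z hz]

theorem inner_u0_Pp (z : ℂ) (hz : ‖z‖ < 1) (v : L2) :
    ⟪Uop (kLp (conj z)), Pp v⟫ = 0 := by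
  rw [← inner_Pp, E8 z hz, inner_zero_left]

theorem inner_u0_Qm (z : ℂ) (hz : ‖z‖ < 1) (v : L2) :
    ⟪Uop (kLp (conj z)), Qm v⟫ = ⟪Uop (kLp (conj z)), v⟫ := by
  rw [Qm_apply, inner_sub_right, inner_u0_Pp z hz, sub_zero]

theorem inner_kz_Pp (z : ℂ) (hz : ‖z‖ < 1) (v : L2) :
    ⟪kLp z, Pp v⟫ = ⟪kLp z, v⟫ := by
  rw [← inner_Pp, E7 z hz]

theorem Pp_eq_sub (v : L2) : Pp v = v - Qm v := by
  rw [Qm_apply]; abel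

theorem keyBranch (z : ℂ) (hz : ‖z‖ < 1) (f g : Linf) (v : L2) :
    Qm (mulCL (phiInf z) (Qm (mulCL f (Pp (mulCL g v)))))
      = Qm (mulCL f (mulCL g (mulCL (phiInf z) v)))
        + ⟪Uop (kLp (conj z)), mulCL g v⟫ • Qm (mulCL f (kLp z))
        - Qm (mulCL f (Qm (mulCL g (mulCL (phiInf z) v)))) := by
  rw [QmMphiQm z hz, mulCL_comm (phiInf z) f]
  have h1 : mulCL (phiInf z) (Pp (mulCL g v))
      = mulCL g (mulCL (phiInf z) v) + ⟪Uop (kLp (conj z)), mulCL g v⟫ • kLp z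
        - Qm (mulCL g (mulCL (phiInf z) v)) := by
    have h2 : Pp (mulCL g v) = mulCL g v - Qm (mulCL g v) := Pp_eq_sub _
    rw [h2, map_sub, MphiQm z hz, mulCL_comm (phiInf z) g]
    abel
  rw [h1, map_sub, map_add, _root_.map_smul, map_sub, map_add, _root_.map_smul]

/-- For `f, g ∈ L^∞` and `z ∈ 𝔻`, as bounded operators from `H²` to
`[H²]^⊥`:
`S_{φ_z} H_f T_g T_{φ̄_z} − H_f T_g = −(H_f T_g k_z) ⊗ k_z + [(H_f k_z) ⊗ (H_g* U k_{z̄})] T_{φ̄_z}`. -/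
theorem statement_15 (f g : Linf) (z : ℂ) (hz : ‖z‖ < 1) :
    sop (phiInf z) ∘L hank f ∘L toep g ∘L toep (conjLp (phiInf z)) - hank f ∘L toep g
      = - rankOne ((hank f ∘L toep g) (kLp z)) (kLp z)
        + rankOne (hank f (kLp z))
            (ContinuousLinearMap.adjoint (hank g) (Uop (kLp (conj z))))
          ∘L toep (conjLp (phiInf z)) := by
  apply ContinuousLinearMap.ext
  intro x
  have hw : Pp (mulCL (conjLp (phiInf z)) (Pp x))
      = mulCL (conjLp (phiInf z)) (Pp x) + ⟪kLp z, x⟫ • Uop (kLp (conj z)) := by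
    rw [Pp_eq_sub, E5e z hz x, sub_neg_eq_add]
  simp only [sop, hank, toep, ContinuousLinearMap.comp_apply, ContinuousLinearMap.sub_apply,
    ContinuousLinearMap.add_apply, ContinuousLinearMap.neg_apply, rankOne_apply,
    Pp_idem, Qm_idem, E7 z hz]
  simp only [ContinuousLinearMap.adjoint_inner_left, ContinuousLinearMap.comp_apply, Pp_idem]
  rw [inner_u0_Qm z hz]
  rw [hw]
  simp only [map_add, _root_.map_smul, inner_add_right, inner_smul_right, smul_add]
  rw [keyBranch z hz f g (mulCL (conjLp (phiInf z)) (Pp x)),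
    keyBranch z hz f g (Uop (kLp (conj z)))]
  simp only [phi_mul_conj_phi z hz, phi_mul_u0 z hz, map_neg, inner_neg_right,
    smul_neg, neg_smul]
  simp only [Pp_eq_sub]
  simp only [map_sub, map_add, _root_.map_smul, inner_sub_right, inner_add_right,
    inner_smul_right, smul_sub, smul_add]
  module

end HTTO
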